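/- Under the ideal cluster assumption (A_{ij} = 0 whenever y_i ≠ y_j) and for α ∈ (0,1), every labeled instance i ≤ l satisfies F*_{i,y_i} ≥ 1 and F*_{i,c} = 0 for all c ≠ y_i; in particular every labeled instance is correctly predicted. -/

import Mathlib

open Matrix BigOperators Finset

attribute [local instance] Classical.propDecidable

/-- Row sum `d_i = Σ_j A_{ij}` of the affinity matrix. -/
noncomputable def rowSum {n : ℕ} (A : Matrix (Fin n) (Fin n) ℝ) (i : Fin n) : ℝ :=
  ∑ j, A i j

/-- The normalized matrix `S = D^{-1/2} A D^{-1/2}`. -/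
noncomputable def Smat {n : ℕ} (A : Matrix (Fin n) (Fin n) ℝ) : Matrix (Fin n) (Fin n) ℝ :=
  Matrix.diagonal (fun i => (Real.sqrt (rowSum A i))⁻¹) * A *
    Matrix.diagonal (fun i => (Real.sqrt (rowSum A i))⁻¹)

/-- Label matrix `Y` (indices `i` with `(i : ℕ) < l` are the labeled ones). -/
noncomputable def Ymat {n K : ℕ} (l : ℕ) (y : Fin n → Fin K) : Matrix (Fin n) (Fin K) ℝ :=
  fun i c => if (i : ℕ) < l ∧ y i = c then 1 else 0

/-- `F* = (I - α S)^{-1} Y`. -/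
noncomputable def Fstar {n K : ℕ} (l : ℕ) (y : Fin n → Fin K) (α : ℝ)
    (A : Matrix (Fin n) (Fin n) ℝ) : Matrix (Fin n) (Fin K) ℝ :=
  (1 - α • Smat A)⁻¹ * Ymat l y

/-- Instance `i` is correctly predicted: `F*_{i, y_i} > F*_{i, c}` for all `c ≠ y_i`. -/
def CorrectlyPredicted {n K : ℕ} (l : ℕ) (y : Fin n → Fin K) (α : ℝ)
    (A : Matrix (Fin n) (Fin n) ℝ) (i : Fin n) : Prop :=
  ∀ c : Fin K, c ≠ y i → Fstar l y α A i c < Fstar l y α A i (y i)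

/-- Accuracy on the unlabeled instances (those with `(i : ℕ) ≥ l`). -/
noncomputable def AccLP {n K : ℕ} (l : ℕ) (y : Fin n → Fin K) (α : ℝ)
    (A : Matrix (Fin n) (Fin n) ℝ) : ℝ :=
  ((Finset.univ.filter
      (fun i : Fin n => l ≤ (i : ℕ) ∧ CorrectlyPredicted l y α A i)).card : ℝ) /
    ((n : ℝ) - (l : ℝ))

/-- `i` and `j` are connected w.r.t. `B`: a finite sequence of at least one step
with positive affinities joins them. -/
def Connected {n : ℕ} (B : Matrix (Fin n) (Fin n) ℝ) : Fin n → Fin n → Prop :=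
  Relation.TransGen (fun i j => 0 < B i j)

/-! With `P = D⁻¹A` one has `1 - αS = D^{1/2} (1 - αP) D^{-1/2}`, and `αP` is nonnegative with
row sums `α < 1`, so `(1 - αP)⁻¹ = ∑ₖ (αP)ᵏ` is entrywise nonnegative with diagonal entries at
least `1`; conjugating by the positive diagonal `D^{1/2}` preserves both properties. Under the
cluster assumption `1 - αS` is block diagonal along the classes, hence so is its inverse. So
`F*_{ic} = ∑ⱼ (1 - αS)⁻¹_{ij} Y_{jc}` only involves labeled `j` with `y_j = y_i`: it vanishes for
`c ≠ y_i`, and for `c = y_i` it is at least `(1 - αS)⁻¹_{ii} ≥ 1`. -/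

namespace Matrix

variable {ι : Type*} [Fintype ι] [DecidableEq ι]

section LinftyOpNorm

attribute [local instance] Matrix.linftyOpNormedAddCommGroup Matrix.linftyOpNormedSpace
  Matrix.linftyOpNormedRing

theorem hasSum_pow_apply_inv_one_sub {𝕜 : Type*} [RCLike 𝕜]
    {B : Matrix ι ι 𝕜} (hB : ∀ i, ∑ j, ‖B i j‖ < 1) (i j : ι) :
    HasSum (fun k => (B ^ k) i j) ((1 - B)⁻¹ i j) := by
  have hnorm : ‖B‖₊ < 1 := by
    rw [linfty_opNNNorm_def, Finset.sup_lt_iff zero_lt_one]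
    intro i _
    rw [← NNReal.coe_lt_coe]
    push_cast
    exact hB i
  rw [nonsing_inv_eq_ringInverse]
  exact (hasSum_geom_series_inverse B hnorm).mapL (entryLinearMap 𝕜 𝕜 i j).toContinuousLinearMap

end LinftyOpNorm

section Substochastic

variable {B : Matrix ι ι ℝ}

theorem hasSum_pow_apply_inv_one_sub_of_nonneg (hB : ∀ i j, 0 ≤ B i j)
    (hrow : ∀ i, ∑ j, B i j < 1) (i j : ι) : HasSum (fun k => (B ^ k) i j) ((1 - B)⁻¹ i j) :=
  hasSum_pow_apply_inv_one_sub (by simpa only [Real.norm_of_nonneg (hB _ _)] using hrow) i j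

theorem inv_one_sub_apply_nonneg (hB : ∀ i j, 0 ≤ B i j) (hrow : ∀ i, ∑ j, B i j < 1)
    (i j : ι) : 0 ≤ (1 - B)⁻¹ i j := by
  have hsum := hasSum_pow_apply_inv_one_sub_of_nonneg hB hrow i j
  exact hsum.nonneg fun k => pow_apply_nonneg hB k i j

theorem one_le_inv_one_sub_apply_self (hB : ∀ i j, 0 ≤ B i j) (hrow : ∀ i, ∑ j, B i j < 1)
    (i : ι) : 1 ≤ (1 - B)⁻¹ i i := by
  have hsum := hasSum_pow_apply_inv_one_sub_of_nonneg hB hrow i i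
  simpa using le_hasSum hsum 0 fun k _ => pow_apply_nonneg hB k i i

end Substochastic

theorem inv_apply_eq_zero_of_ne {R β : Type*} [CommRing R] [LinearOrder β] {M : Matrix ι ι R}
    (b : ι → β) (hM : ∀ i j, b i ≠ b j → M i j = 0) {i j : ι} (hij : b i ≠ b j) :
    M⁻¹ i j = 0 := by
  by_cases hdet : IsUnit M.det
  · -- `M` is block triangular both for `b` and for the order dual of `b`.
    let := M.invertibleOfIsUnitDet hdet
    rcases hij.lt_or_gt with hlt | hlt
    · have hM' : M.BlockTriangular (OrderDual.toDual ∘ b) := fun i j h => hM i j h.ne'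
      exact blockTriangular_inv_of_blockTriangular hM' hlt
    · have hM' : M.BlockTriangular b := fun i j h => hM i j h.ne'
      exact blockTriangular_inv_of_blockTriangular hM' hlt
  · simp [nonsing_inv_apply_not_isUnit M hdet]

theorem inv_conj_of_mul_eq_one {R : Type*} [CommRing R] {E E' M : Matrix ι ι R}
    (h : E' * E = 1) :
    (E * M * E')⁻¹ = E * M⁻¹ * E' := by
  have hE' : E⁻¹ = E' := inv_eq_left_inv h
  rw [← hE', mul_inv_rev, mul_inv_rev, nonsing_inv_nonsing_inv _ (isUnit_det_of_left_inverse h),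
    mul_assoc]

end Matrix

section NormalizedAffinity

variable {n : ℕ}

noncomputable def randomWalkMatrix (A : Matrix (Fin n) (Fin n) ℝ) : Matrix (Fin n) (Fin n) ℝ :=
  diagonal (fun i => (rowSum A i)⁻¹) * A

theorem randomWalkMatrix_apply (A : Matrix (Fin n) (Fin n) ℝ) (i j : Fin n) :
    randomWalkMatrix A i j = (rowSum A i)⁻¹ * A i j := by
  simp [randomWalkMatrix, diagonal_mul]

theorem sum_randomWalkMatrix_apply {A : Matrix (Fin n) (Fin n) ℝ} (hrow : ∀ i, 0 < rowSum A i)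
    (i : Fin n) : ∑ j, randomWalkMatrix A i j = 1 := by
  simp only [randomWalkMatrix_apply, ← Finset.mul_sum]
  exact inv_mul_cancel₀ (hrow i).ne'

theorem Smat_apply (A : Matrix (Fin n) (Fin n) ℝ) (i j : Fin n) :
    Smat A i j = (√(rowSum A i))⁻¹ * A i j * (√(rowSum A j))⁻¹ := by
  simp [Smat, diagonal_mul, mul_diagonal]

theorem one_sub_smul_Smat_eq {A : Matrix (Fin n) (Fin n) ℝ} (hrow : ∀ i, 0 < rowSum A i)
    (α : ℝ) :
    1 - α • Smat A = diagonal (fun i => √(rowSum A i)) * (1 - α • randomWalkMatrix A) *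
      diagonal (fun i => (√(rowSum A i))⁻¹) := by
  have hsq : ∀ k, (rowSum A k)⁻¹ = (√(rowSum A k) ^ 2)⁻¹ := fun k => by
    rw [Real.sq_sqrt (hrow k).le]
  have hne : ∀ k, √(rowSum A k) ≠ 0 := fun k => (Real.sqrt_pos.mpr (hrow k)).ne'
  ext i j
  rw [mul_diagonal, diagonal_mul]
  simp only [Matrix.sub_apply, Matrix.smul_apply, smul_eq_mul, Smat_apply, randomWalkMatrix_apply,
    one_apply]
  rw [hsq i]
  split_ifs with hij
  · subst hij
    field_simp [hne i]
  · field_simp [hne i, hne j]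
    ring

theorem inv_one_sub_smul_Smat_apply {A : Matrix (Fin n) (Fin n) ℝ} (hrow : ∀ i, 0 < rowSum A i)
    (α : ℝ) (i j : Fin n) :
    (1 - α • Smat A)⁻¹ i j =
      √(rowSum A i) * (1 - α • randomWalkMatrix A)⁻¹ i j * (√(rowSum A j))⁻¹ := by
  have hinv : diagonal (fun i => (√(rowSum A i))⁻¹) * diagonal (fun i => √(rowSum A i)) = 1 := by
    rw [diagonal_mul_diagonal, ← diagonal_one]
    exact congrArg diagonal (funext fun i => inv_mul_cancel₀ (Real.sqrt_pos.mpr (hrow i)).ne')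
  rw [one_sub_smul_Smat_eq hrow, inv_conj_of_mul_eq_one hinv, mul_diagonal, diagonal_mul]

theorem one_sub_smul_Smat_apply_eq_zero {A : Matrix (Fin n) (Fin n) ℝ} (α : ℝ) {i j : Fin n}
    (hij : i ≠ j) (hA : A i j = 0) : (1 - α • Smat A) i j = 0 := by
  simp [Smat_apply, hA, one_apply_ne hij]

section PropagationKernel

variable {A : Matrix (Fin n) (Fin n) ℝ} {α : ℝ}

theorem smul_randomWalkMatrix_apply_nonneg (hα : 0 ≤ α) (hnonneg : ∀ i j, 0 ≤ A i j)
    (hrow : ∀ i, 0 < rowSum A i) (i j : Fin n) : 0 ≤ (α • randomWalkMatrix A) i j := by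
  rw [Matrix.smul_apply, randomWalkMatrix_apply, smul_eq_mul]
  exact mul_nonneg hα (mul_nonneg (inv_nonneg.mpr (hrow i).le) (hnonneg i j))

theorem sum_smul_randomWalkMatrix_apply (hrow : ∀ i, 0 < rowSum A i) (i : Fin n) :
    ∑ j, (α • randomWalkMatrix A) i j = α := by
  simp only [Matrix.smul_apply, smul_eq_mul, ← Finset.mul_sum, sum_randomWalkMatrix_apply hrow,
    mul_one]

theorem inv_one_sub_smul_Smat_apply_nonneg (hα0 : 0 ≤ α) (hα1 : α < 1)
    (hnonneg : ∀ i j, 0 ≤ A i j) (hrow : ∀ i, 0 < rowSum A i) (i j : Fin n) :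
    0 ≤ (1 - α • Smat A)⁻¹ i j := by
  rw [inv_one_sub_smul_Smat_apply hrow]
  have hG := inv_one_sub_apply_nonneg (smul_randomWalkMatrix_apply_nonneg hα0 hnonneg hrow)
    (fun k => (sum_smul_randomWalkMatrix_apply hrow k).trans_lt hα1) i j
  positivity

theorem one_le_inv_one_sub_smul_Smat_apply_self (hα0 : 0 ≤ α) (hα1 : α < 1)
    (hnonneg : ∀ i j, 0 ≤ A i j) (hrow : ∀ i, 0 < rowSum A i) (i : Fin n) :
    1 ≤ (1 - α • Smat A)⁻¹ i i := by
  rw [inv_one_sub_smul_Smat_apply hrow, mul_comm, ← mul_assoc,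
    inv_mul_cancel₀ (Real.sqrt_pos.mpr (hrow i)).ne', one_mul]
  exact one_le_inv_one_sub_apply_self (smul_randomWalkMatrix_apply_nonneg hα0 hnonneg hrow)
    (fun k => (sum_smul_randomWalkMatrix_apply hrow k).trans_lt hα1) i

end PropagationKernel

section LabelMatrix

variable {K l : ℕ} {y : Fin n → Fin K} {G : Matrix (Fin n) (Fin n) ℝ} {i : Fin n}

theorem mul_Ymat_apply_eq_zero (hG : ∀ j, y i ≠ y j → G i j = 0) {c : Fin K} (hc : c ≠ y i) :
    (G * Ymat l y) i c = 0 := by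
  rw [mul_apply]
  refine Finset.sum_eq_zero fun j _ => ?_
  by_cases hj : y j = c
  · rw [hG j (hj ▸ hc.symm), zero_mul]
  · simp [Ymat, hj]

theorem one_le_mul_Ymat_apply_self (hG : ∀ j, 0 ≤ G i j) (hGi : 1 ≤ G i i) (hi : (i : ℕ) < l) :
    1 ≤ (G * Ymat l y) i (y i) := by
  have hY : ∀ j, 0 ≤ Ymat l y j (y i) := fun j => by unfold Ymat; split_ifs <;> norm_num
  calc 1 ≤ G i i * Ymat l y i (y i) := by simpa [Ymat, hi] using hGi
    _ ≤ ∑ j, G i j * Ymat l y j (y i) :=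
      Finset.single_le_sum (fun j _ => mul_nonneg (hG j) (hY j)) (Finset.mem_univ i)
    _ = (G * Ymat l y) i (y i) := (mul_apply ..).symm

end LabelMatrix

end NormalizedAffinity

theorem lp_labeled_correct_general
    {n K : ℕ} (l : ℕ)
    (y : Fin n → Fin K) (α : ℝ) (hα0 : 0 < α) (hα1 : α < 1)
    (A : Matrix (Fin n) (Fin n) ℝ)
    (hnonneg : ∀ i j, 0 ≤ A i j)
    (hrow : ∀ i, 0 < rowSum A i)
    (hcluster : ∀ i j, y i ≠ y j → A i j = 0)
    (i : Fin n) (hi : (i : ℕ) < l) :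
    1 ≤ Fstar l y α A i (y i) ∧ (∀ c : Fin K, c ≠ y i → Fstar l y α A i c = 0) ∧
      CorrectlyPredicted l y α A i := by
  have hblock : ∀ j, y i ≠ y j → (1 - α • Smat A)⁻¹ i j = 0 :=
    fun j => inv_apply_eq_zero_of_ne y
      fun j k h => one_sub_smul_Smat_apply_eq_zero α (ne_of_apply_ne y h) (hcluster j k h)
  have hself : 1 ≤ Fstar l y α A i (y i) :=
    one_le_mul_Ymat_apply_self (inv_one_sub_smul_Smat_apply_nonneg hα0.le hα1 hnonneg hrow i)
      (one_le_inv_one_sub_smul_Smat_apply_self hα0.le hα1 hnonneg hrow i) hi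
  have hother : ∀ c, c ≠ y i → Fstar l y α A i c = 0 :=
    fun c hc => mul_Ymat_apply_eq_zero hblock hc
  exact ⟨hself, hother, fun c hc => (hother c hc).trans_lt (zero_lt_one.trans_le hself)⟩

/-- under the ideal cluster assumption, every labeled instance `i` satisfies
`F*_{i,y_i} ≥ 1` and `F*_{i,c} = 0` for `c ≠ y_i`; in particular it is correctly
predicted. -/
theorem lp_labeled_correct
    {n K : ℕ} (l : ℕ) (hl : 0 < l) (hln : l < n) (hK : 0 < K)
    (y : Fin n → Fin K) (α : ℝ) (hα0 : 0 < α) (hα1 : α < 1)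
    (A : Matrix (Fin n) (Fin n) ℝ)
    (hsym : A.IsSymm) (hnonneg : ∀ i j, 0 ≤ A i j) (hdiag : ∀ i, A i i = 0)
    (hrow : ∀ i, 0 < rowSum A i)
    (hcluster : ∀ i j, y i ≠ y j → A i j = 0)
    (i : Fin n) (hi : (i : ℕ) < l) :
    1 ≤ Fstar l y α A i (y i) ∧ (∀ c : Fin K, c ≠ y i → Fstar l y α A i c = 0) ∧
      CorrectlyPredicted l y α A i :=
  lp_labeled_correct_general l y α hα0 hα1 A hnonneg hrow hcluster i hi
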